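/- arXiv:2208.13407 — 4 statements merged into one kernel-verified Lean document; each statement's English description precedes it below -/
import Mathlib

section
/- Let X be a compact topological space equipped with its Borel σ-algebra, let m ≥ 2, and let s_1,…,s_m : X → ℂ be continuous functions such that the subfamily s_1,…,s_{m−1} has no common zero. Then there exists a positive definite hermitian m×m complex matrix H such that there is NO finite Borel measure μ on X with H_{ij} = ∫_X s_i(x) · conj(s_j(x)) dμ(x) for all 1 ≤ i, j ≤ m. In other words, the Gram map μ ↦ Gram(μ) is not surjective onto the positive definite hermitian matrices. -/
open MeasureTheory
open scoped ComplexOrder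

/-- If the subfamily `s_1, …, s_{m-1}` (all but the last function) has no
common zero, then some positive definite hermitian matrix is not the Gram matrix
`(∫ s_i conj(s_j) dμ)_{ij}` of any finite Borel measure: the Gram map is not surjective. -/
theorem stmt_2 {X : Type*} [TopologicalSpace X] [CompactSpace X]
    [MeasurableSpace X] [BorelSpace X]
    {m : ℕ} (hm : 2 ≤ m) (s : Fin m → X → ℂ)
    (hs : ∀ i, Continuous (s i))
    (hnz : ∀ x : X, ∃ i : Fin m, (i : ℕ) < m - 1 ∧ s i x ≠ 0) :
    ∃ H : Matrix (Fin m) (Fin m) ℂ, H.PosDef ∧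
      ¬ ∃ μ : Measure X, IsFiniteMeasure μ ∧
        ∀ i j : Fin m, H i j = ∫ x, s i x * (starRingEnd ℂ) (s j x) ∂μ := by
  rcases isEmpty_or_nonempty X with hX | hX
  · refine ⟨1, Matrix.PosDef.one, ?_⟩
    rintro ⟨μ, _, hG⟩
    have h := hG ⟨0, by omega⟩ ⟨0, by omega⟩
    rw [Measure.eq_zero_of_isEmpty μ, integral_zero_measure] at h
    simp [Matrix.one_apply] at h
  -- nonempty case
  set L : Fin m := ⟨m - 1, by omega⟩ with hL
  set F : Finset (Fin m) := Finset.univ.filter (fun i => (i : ℕ) < m - 1) with hF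
  set f : X → ℝ := fun x => ∑ i ∈ F, Complex.normSq (s i x) with hf
  have hfc : Continuous f := by
    apply continuous_finset_sum
    intro i _
    exact Complex.continuous_normSq.comp (hs i)
  -- lower bound c for f
  obtain ⟨x₀, -, hx₀⟩ :=
    isCompact_univ.exists_isMinOn Set.univ_nonempty hfc.continuousOn
  set c : ℝ := f x₀ with hc
  have hcpos : 0 < c := by
    obtain ⟨i, hi1, hi2⟩ := hnz x₀
    apply Finset.sum_pos' (fun j _ => Complex.normSq_nonneg _)
    exact ⟨i, by simp [hF, hi1], Complex.normSq_pos.mpr hi2⟩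
  have hcf : ∀ x, c ≤ f x := fun x => hx₀ (Set.mem_univ x)
  -- upper bound K for normSq (s L x)
  obtain ⟨x₁, -, hx₁⟩ := isCompact_univ.exists_isMaxOn Set.univ_nonempty
    ((Complex.continuous_normSq.comp (hs L)).continuousOn)
  set K : ℝ := Complex.normSq (s L x₁) with hK
  have hK0 : 0 ≤ K := Complex.normSq_nonneg _
  have hKf : ∀ x, Complex.normSq (s L x) ≤ K := fun x => hx₁ (Set.mem_univ x)
  set N : ℝ := K * m / c + 1 with hN
  have hN0 : 0 < N := by positivity
  refine ⟨Matrix.diagonal (fun i => if i = L then (N : ℂ) else 1), ?_, ?_⟩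
  · rw [Matrix.posDef_diagonal_iff]
    intro i
    by_cases h : i = L <;> simp [h, Complex.zero_lt_real, hN0, zero_lt_one]
  rintro ⟨μ, hμfin, hG⟩
  -- integrability
  have hint : ∀ i : Fin m, Integrable (fun x => Complex.normSq (s i x)) μ := by
    intro i
    exact integrableOn_univ.mp
      ((Complex.continuous_normSq.comp (hs i)).continuousOn.integrableOn_compact'
        isCompact_univ MeasurableSet.univ)
  -- diagonal Gram entries
  have hdiag : ∀ i : Fin m,
      ((if i = L then (N : ℂ) else 1)) = ((∫ x, Complex.normSq (s i x) ∂μ : ℝ) : ℂ) := by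
    intro i
    have := hG i i
    simp only [Matrix.diagonal_apply_eq] at this
    rw [this]
    simp_rw [Complex.mul_conj]
    exact integral_ofReal
  set T : ℝ := (μ Set.univ).toReal with hT
  have hT0 : 0 ≤ T := ENNReal.toReal_nonneg
  -- bound on T
  have hfint : Integrable f μ := integrable_finset_sum _ (fun i _ => hint i)
  have h1 : c * T ≤ ∫ x, f x ∂μ := by
    have := integral_mono (integrable_const c) hfint hcf
    rwa [integral_const, smul_eq_mul, mul_comm] at this
  have h2 : (∫ x, f x ∂μ) = (F.card : ℝ) := by
    have key : ∀ i ∈ F, (∫ x, Complex.normSq (s i x) ∂μ) = 1 := by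
      intro i hi
      have hiL : i ≠ L := by
        have := (Finset.mem_filter.mp hi).2
        intro h; rw [h] at this; simp [hL] at this
      have := hdiag i
      rw [if_neg hiL] at this
      exact_mod_cast this.symm
    rw [hf, integral_finset_sum _ (fun i _ => hint i), Finset.sum_congr rfl key]
    simp
  have hcard : (F.card : ℝ) ≤ m := by
    have : F.card ≤ (Finset.univ : Finset (Fin m)).card := Finset.card_filter_le _ _
    simpa using this.trans_eq (Finset.card_fin m)
  have hTle : T ≤ m / c := by
    rw [le_div_iff₀ hcpos]
    nlinarith [h1, h2, hcard]
  -- bound on N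
  have hNL : N = ∫ x, Complex.normSq (s L x) ∂μ := by
    have := hdiag L
    rw [if_pos rfl] at this
    exact_mod_cast this
  have h3 : (∫ x, Complex.normSq (s L x) ∂μ) ≤ K * T := by
    have := integral_mono (hint L) (integrable_const K) hKf
    rwa [integral_const, smul_eq_mul, mul_comm] at this
  have : N ≤ K * m / c := by
    rw [hNL]
    calc (∫ x, Complex.normSq (s L x) ∂μ) ≤ K * T := h3
    _ ≤ K * (m / c) := by nlinarith
    _ = K * m / c := by ring
  linarith [hN]
end

section
/- Let X be a compact metric space equipped with its Borel σ-algebra and let s_1,…,s_m : X → ℂ be continuous functions. Define P : X → (m×m hermitian complex matrices) by P(x)_{ij} = s_i(x) · conj(s_j(x)). Then, inside the real vector space of m×m hermitian complex matrices, the closure of the set G = { Gram(μ) : μ a finite Borel measure on X } equals the closure of the set F₀ = { ∑_{i=1}^{t} a_i · P(x_i) : t ∈ ℕ, x_1,…,x_t ∈ X, a_1,…,a_t ≥ 0 } of finite nonnegative combinations of the matrices P(x). -/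
/-!
A Gram matrix is the integral `∫ P dμ`. After normalising `μ` to a probability measure, Jensen's
inequality for the closed convex set `closure (cone P)` puts the average of `P` into it, and this
closed cone is stable under rescaling by `μ(X)`. Conversely, the nonnegative combination
`∑ aᵢ P(xᵢ)` is the Gram matrix of the measure `∑ aᵢ δ_{xᵢ}`.
-/

open MeasureTheory Set

theorem PointedCone.mem_hull_range_iff_exists_fin {R E X : Type*} [Semiring R] [PartialOrder R]
    [IsOrderedRing R] [AddCommMonoid E] [Module R E] {P : X → E} {v : E} :
    v ∈ PointedCone.hull R (range P) ↔
      ∃ (t : ℕ) (x : Fin t → X) (a : Fin t → R), (∀ i, 0 ≤ a i) ∧ v = ∑ i, a i • P (x i) := by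
  constructor
  · intro hv
    obtain ⟨t, c, g, rfl⟩ := Submodule.mem_span_set'.mp hv
    choose x hx using fun i => (g i).2
    exact ⟨t, x, fun i => c i, fun i => (c i).2, by simp [hx]⟩
  · rintro ⟨t, x, a, ha, rfl⟩
    exact Submodule.sum_mem _ fun i _ =>
      PointedCone.smul_mem _ (ha i) (PointedCone.subset_hull (mem_range_self (x i)))

section Integral

variable {X E : Type*} [MeasurableSpace X] [NormedAddCommGroup E] [NormedSpace ℝ E]
  [CompleteSpace E]

theorem PointedCone.integral_mem {μ : Measure X} [IsFiniteMeasure μ] {f : X → E}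
    {C : PointedCone ℝ E} (hC : IsClosed (C : Set E)) (hf : ∀ᵐ x ∂μ, f x ∈ C)
    (hfi : Integrable f μ) : ∫ x, f x ∂μ ∈ C := by
  rcases eq_zero_or_neZero μ with rfl | _
  · simp
  rw [← measure_smul_average]
  exact C.smul_mem measureReal_nonneg (C.convex.average_mem hC hf hfi)

theorem integral_mem_closure_hull_range {μ : Measure X} [IsFiniteMeasure μ] {P : X → E}
    (hP : Integrable P μ) : ∫ x, P x ∂μ ∈ closure (PointedCone.hull ℝ (range P) : Set E) :=
  PointedCone.integral_mem (C := (PointedCone.hull ℝ (range P)).closure) isClosed_closure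
    (ae_of_all _ fun x => subset_closure (PointedCone.subset_hull (mem_range_self x))) hP

theorem integral_sum_smul_dirac [MeasurableSingletonClass X] {ι : Type*} [Fintype ι]
    (f : X → E) (x : ι → X) {a : ι → ℝ} (ha : ∀ i, 0 ≤ a i) :
    ∫ y, f y ∂(∑ i, (a i).toNNReal • Measure.dirac (x i)) = ∑ i, a i • f (x i) := by
  rw [integral_finsetSum_measure fun i _ => (integrable_dirac (by simp)).smul_measure_nnreal]
  simp [integral_smul_nnreal_measure, integral_dirac, NNReal.smul_def, Real.coe_toNNReal _ (ha _)]

theorem integral_apply_apply {μ : Measure X} {ι κ : Type*} [Fintype ι] [Fintype κ]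
    {f : X → ι → κ → E} (hf : Integrable f μ) (i : ι) (j : κ) :
    (∫ x, f x ∂μ) i j = ∫ x, f x i j ∂μ := by
  rw [eval_integral hf.eval, eval_integral (hf.eval i).eval]

end Integral

/-- measure-theoretic form of the paper's Theorem 1.4: the closure of the
set of Gram matrices of finite Borel measures equals the closure of the set of finite
nonnegative combinations of the point-evaluation matrices `P(x)_{ij} = s_i(x) conj(s_j(x))`. -/
theorem stmt_5 {X : Type*} [MetricSpace X] [CompactSpace X]
    [MeasurableSpace X] [BorelSpace X]
    {m : ℕ} (s : Fin m → X → ℂ) (hs : ∀ i, Continuous (s i))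
    (P : X → Matrix (Fin m) (Fin m) ℂ)
    (hP : ∀ x i j, P x i j = s i x * (starRingEnd ℂ) (s j x)) :
    closure {H : Matrix (Fin m) (Fin m) ℂ |
        ∃ μ : Measure X, IsFiniteMeasure μ ∧
          ∀ i j, H i j = ∫ x, s i x * (starRingEnd ℂ) (s j x) ∂μ}
      = closure {H : Matrix (Fin m) (Fin m) ℂ |
        ∃ (t : ℕ) (x : Fin t → X) (a : Fin t → ℝ), (∀ i, 0 ≤ a i) ∧
          H = ∑ i, a i • P (x i)} := by
  -- `Matrix` has no norm instance, so `P` is integrated as a function `X → Fin m → Fin m → ℂ`.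
  let g : X → Fin m → Fin m → ℂ := fun x i j => s i x * (starRingEnd ℂ) (s j x)
  have hgP : g = P := funext fun x => funext fun i => funext fun j => (hP x i j).symm
  have hull_eq : {H : Matrix (Fin m) (Fin m) ℂ | ∃ (t : ℕ) (x : Fin t → X) (a : Fin t → ℝ),
      (∀ i, 0 ≤ a i) ∧ H = ∑ i, a i • P (x i)} = PointedCone.hull ℝ (range P) := by
    ext H; exact PointedCone.mem_hull_range_iff_exists_fin.symm
  apply le_antisymm
  · refine closure_minimal ?_ isClosed_closure
    rintro H ⟨μ, hμ, hH⟩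
    have hgi : Integrable g μ :=
      (continuous_pi fun i => continuous_pi fun j => (hs i).mul (hs j).star)
        |>.integrable_of_hasCompactSupport (.of_compactSpace _)
    have hHg : H = ∫ x, g x ∂μ := by
      ext i j; rw [hH, integral_apply_apply hgi]
    rw [hHg, hull_eq, ← hgP]
    exact integral_mem_closure_hull_range hgi
  · refine closure_mono ?_
    rintro H ⟨t, x, a, ha, rfl⟩
    refine ⟨∑ k, (a k).toNNReal • Measure.dirac (x k), inferInstance, fun i j => ?_⟩
    rw [integral_sum_smul_dirac _ _ ha]
    simp [Matrix.sum_apply, hP]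
end

section
/- Let U ⊆ ℂ be a nonempty open connected set, let p ∈ U, and let f_1,…,f_m : U → ℂ be holomorphic functions that are linearly independent over ℂ. Then there exists an invertible m×m complex matrix A such that, setting g_i = ∑_{j=1}^{m} A_{ij} f_j, each g_i is not identically zero on U and the orders of vanishing of g_1, g_2, …, g_m at p are finite and strictly increasing: ord_p(g_1) < ord_p(g_2) < ⋯ < ord_p(g_m). -/
/-!
By the identity theorem every nonzero combination `∑ j, a j * f j` has a finite order at `p`.
The Taylor coefficients at `p` of index in the set of orders that occur form an injective linear
map on coefficient vectors, so at least `m` distinct orders occur. Choosing a combination of each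
of `m` such orders, listed increasingly, gives the rows of `A`; they are independent because a
function is never a combination of functions of strictly higher order.
-/

open Set Module

section Order

variable {𝕜 : Type*} [NontriviallyNormedField 𝕜] {E : Type*} [NormedAddCommGroup E]
  [NormedSpace 𝕜 E] {p : 𝕜}

theorem analyticOrderAt_le_analyticOrderAt_const_smul (c : 𝕜) (f : 𝕜 → E) :
    analyticOrderAt f p ≤ analyticOrderAt (c • f) p := by
  by_cases hf : AnalyticAt 𝕜 f p
  · calc analyticOrderAt f p
        ≤ analyticOrderAt (fun _ ↦ c) p + analyticOrderAt f p := le_add_self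
      _ = analyticOrderAt (c • f) p := (analyticOrderAt_smul analyticAt_const hf).symm
  · rw [analyticOrderAt_of_not_analyticAt hf]
    exact zero_le

theorem le_analyticOrderAt_of_mem_span {s : Set (𝕜 → E)} {n : ℕ∞}
    (hs : ∀ g ∈ s, n ≤ analyticOrderAt g p) {f : 𝕜 → E} (hf : f ∈ Submodule.span 𝕜 s) :
    n ≤ analyticOrderAt f p := by
  induction hf using Submodule.span_induction with
  | mem g hg => exact hs g hg
  | zero => exact le_top.trans_eq (analyticOrderAt_eq_top.mpr (by simp)).symm
  | add f g _ _ hf hg => exact (le_min hf hg).trans le_analyticOrderAt_add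
  | smul c f _ hf => exact hf.trans (analyticOrderAt_le_analyticOrderAt_const_smul c f)

theorem linearIndependent_of_strictMono_analyticOrderAt {k : ℕ} {g : Fin k → 𝕜 → E}
    (hmono : StrictMono fun i ↦ analyticOrderAt (g i) p)
    (hfin : ∀ i, analyticOrderAt (g i) p ≠ ⊤) : LinearIndependent 𝕜 g := by
  induction k with
  | zero => exact linearIndependent_empty_type
  | succ k ih =>
    refine linearIndependent_finSucc.mpr
      ⟨ih (hmono.comp Fin.strictMono_succ) fun i ↦ hfin _, fun hmem ↦ ?_⟩
    have : analyticOrderAt (g 0) p + 1 ≤ analyticOrderAt (g 0) p :=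
      le_analyticOrderAt_of_mem_span (forall_mem_range.mpr fun i ↦
        Order.add_one_le_of_lt (hmono (Fin.succ_pos i))) hmem
    exact lt_irrefl _ ((ENat.add_one_le_iff (hfin 0)).mp this)

end Order

section LinearFamily

variable {𝕜 : Type*} [NontriviallyNormedField 𝕜] [CharZero 𝕜] [CompleteSpace 𝕜] {p : 𝕜}
  {V : Type*} [AddCommGroup V] [Module 𝕜 V] {T : V →ₗ[𝕜] 𝕜 → 𝕜}

theorem finrank_le_encard_analyticOrderAt (hT : ∀ v, AnalyticAt 𝕜 (T v) p)
    (hfin : ∀ v ≠ 0, analyticOrderAt (T v) p ≠ ⊤) :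
    (finrank 𝕜 V : ℕ∞) ≤ {n : ℕ | ∃ v ≠ 0, analyticOrderAt (T v) p = n}.encard := by
  set O := {n : ℕ | ∃ v ≠ 0, analyticOrderAt (T v) p = n}
  rcases O.infinite_or_finite with hO | hO
  · simp [hO.encard_eq]
  have : Fintype O := hO.fintype
  let Φ : V →ₗ[𝕜] O → 𝕜 :=
    { toFun := fun v n ↦ iteratedDeriv n (T v) p
      map_add' := fun v w ↦ funext fun n ↦ by
        simp [iteratedDeriv_add (hT v).contDiffAt (hT w).contDiffAt]
      map_smul' := fun c v ↦ funext fun n ↦ by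
        simp [iteratedDeriv_const_smul (hT v).contDiffAt] }
  have hΦ : Function.Injective Φ := by
    refine (injective_iff_map_eq_zero Φ).mpr fun v hv ↦ ?_
    by_contra hv0
    set n := (analyticOrderAt (T v) p).toNat
    have hn : analyticOrderAt (T v) p = n := (ENat.natCast_toNat (hfin v hv0)).symm
    have := ((analyticOrderAt_eq_nat_iff_iteratedDeriv_eq_zero (hT v)).mp hn).2
    exact this (congrFun hv ⟨n, v, hv0, hn⟩)
  calc (finrank 𝕜 V : ℕ∞) ≤ finrank 𝕜 (O → 𝕜) := by
        exact_mod_cast LinearMap.finrank_le_finrank_of_injective hΦ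
    _ = O.encard := by
        rw [finrank_pi, ← Nat.card_eq_fintype_card, Nat.card_coe_set_eq, hO.cast_ncard_eq]

theorem exists_strictMono_analyticOrderAt (hT : ∀ v, AnalyticAt 𝕜 (T v) p)
    (hfin : ∀ v ≠ 0, analyticOrderAt (T v) p ≠ ⊤) {k : ℕ} (hk : k ≤ finrank 𝕜 V) :
    ∃ w : Fin k → V, ∃ ord : Fin k → ℕ, StrictMono ord ∧
      ∀ i, analyticOrderAt (T (w i)) p = ord i := by
  obtain ⟨t, htO, htk⟩ := exists_subset_encard_eq
    ((Nat.cast_le.mpr hk).trans (finrank_le_encard_analyticOrderAt hT hfin))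
  have ht : t.Finite := finite_of_encard_eq_coe htk
  have hcard : ht.toFinset.card = k := by
    rw [ht.encard_eq_coe_toFinset_card] at htk
    exact_mod_cast htk
  set ord := ht.toFinset.orderEmbOfFin hcard
  have hord i : ∃ v ≠ 0, analyticOrderAt (T v) p = ord i :=
    htO (ht.mem_toFinset.mp (ht.toFinset.orderEmbOfFin_mem hcard i))
  choose w _ hw using hord
  exact ⟨w, ord, ord.strictMono, hw⟩

end LinearFamily

/-- Linearly independent holomorphic functions on a connected open set can
be transformed by an invertible matrix so that the new functions have finite, strictly
increasing orders of vanishing at a given point `p`. -/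
theorem stmt_7 {U : Set ℂ} (hU : IsOpen U) (hUc : IsConnected U)
    (p : ℂ) (hp : p ∈ U)
    {m : ℕ} (f : Fin m → ℂ → ℂ) (hf : ∀ i, DifferentiableOn ℂ (f i) U)
    (hind : LinearIndependent ℂ fun i => U.restrict (f i)) :
    ∃ A : Matrix (Fin m) (Fin m) ℂ, IsUnit A ∧
      ∃ ord : Fin m → ℕ, StrictMono ord ∧
        ∀ i : Fin m,
          (∃ z ∈ U, (∑ j, A i j * f j z) ≠ 0) ∧
          ∃ h : ℂ → ℂ, AnalyticAt ℂ h p ∧ h p ≠ 0 ∧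
            ∀ᶠ z in nhds p, (∑ j, A i j * f j z) = (z - p) ^ (ord i) * h z := by
  set T : (Fin m → ℂ) →ₗ[ℂ] ℂ → ℂ := Fintype.linearCombination ℂ f
  have hT_apply (a : Fin m → ℂ) (z : ℂ) : T a z = ∑ j, a j * f j z := by
    simp [T, Fintype.linearCombination_apply]
  have hT_analytic (a : Fin m → ℂ) : AnalyticOnNhd ℂ (T a) U := by
    rw [show T a = _ from funext (hT_apply a)]
    exact (DifferentiableOn.fun_sum fun j _ ↦ (hf j).const_mul (a j)).analyticOnNhd hU
  have hT_eqOn_zero (a : Fin m → ℂ) (ha : EqOn (T a) 0 U) : a = 0 := by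
    refine funext (Fintype.linearIndependent_iff.mp hind a (funext fun z ↦ ?_))
    simp only [Finset.sum_apply, Pi.smul_apply, smul_eq_mul, Pi.zero_apply]
    exact (hT_apply a z).symm.trans (ha z.2)
  have hT_fin (a : Fin m → ℂ) (ha : a ≠ 0) : analyticOrderAt (T a) p ≠ ⊤ := fun htop ↦
    ha (hT_eqOn_zero a ((hT_analytic a).eqOn_zero_of_preconnected_of_eventuallyEq_zero
      hUc.isPreconnected hp (analyticOrderAt_eq_top.mp htop)))
  obtain ⟨w, ord, hord, hw⟩ := exists_strictMono_analyticOrderAt (fun a ↦ hT_analytic a p hp)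
    hT_fin (finrank_fin_fun ℂ).ge
  have hw_ind : LinearIndependent ℂ w :=
    LinearIndependent.of_comp T (linearIndependent_of_strictMono_analyticOrderAt (p := p)
      (by simpa only [Function.comp_def, hw] using (Nat.strictMono_cast (α := ℕ∞)).comp hord) fun i ↦ by simp [hw])
  refine ⟨Matrix.of w, Matrix.linearIndependent_rows_iff_isUnit.mp hw_ind, ord, hord,
    fun i ↦ ⟨?_, ?_⟩⟩
  · by_contra! h
    exact hw_ind.ne_zero i (hT_eqOn_zero (w i) fun z hz ↦ by simpa [hT_apply] using h z hz)
  · obtain ⟨h, h_an, hp0, h_eq⟩ := ((hT_analytic (w i) p hp).analyticOrderAt_eq_natCast).mp (hw i)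
    exact ⟨h, h_an, hp0, by simpa [hT_apply] using h_eq⟩
end

section
/- Let U ⊆ ℂ be a nonempty open connected set and let f_1,…,f_m : U → ℂ be holomorphic functions that are linearly independent over ℂ. Then the m² functions h_{ij} : U → ℂ defined by h_{ij}(z) = f_i(z) · conj(f_j(z)), for 1 ≤ i, j ≤ m, are linearly independent over ℂ. -/
/-!
Suppose `∑ c i j * f i * conj (f j) = 0` on `U`, and let `B ⊆ U` be a ball. Then
`Ψ z w = ∑ c i j * f i z * conj (f j w)` vanishes on the diagonal of `B`, and polarization shows
that it vanishes on `B × B`. This uses the one-variable identity theorem twice: `ζ ↦ Ψ ζ (conj ζ + c)`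
is holomorphic and vanishes on the horizontal line of fixed points of `ζ ↦ conj ζ + c`, which gives
`Ψ z w = 0` whenever `z.re = w.re`; then `z ↦ Ψ z w` vanishes on the vertical line through `w`.
Fixing `z`, linear independence of the `f j` gives `∑ i, c i j * f i z = 0` on `B`, and, applying
it once more, `c i j = 0`.
-/

open Filter Topology ComplexConjugate

lemma frequently_nhdsNE_of_eventually_line {p : ℂ → Prop} {a v : ℂ} (hv : v ≠ 0)
    (h : ∀ᶠ t : ℝ in 𝓝 0, p (a + t * v)) : ∃ᶠ z in 𝓝[≠] a, p z := by
  have hline : Tendsto (fun t : ℝ => a + t * v) (𝓝[≠] 0) (𝓝[≠] a) := by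
    refine tendsto_nhdsWithin_of_tendsto_nhds_of_eventually_within _ ?_ ?_
    · have : Continuous fun t : ℝ => a + t * v := by fun_prop
      simpa using (this.tendsto 0).mono_left nhdsWithin_le_nhds
    · filter_upwards [self_mem_nhdsWithin] with t ht
      simpa [hv] using ht
  exact hline.frequently (h.filter_mono nhdsWithin_le_nhds).frequently

lemma DifferentiableAt.conj_comp_conj_add {h : ℂ → ℂ} {ζ c : ℂ}
    (hh : DifferentiableAt ℂ h (conj ζ + c)) :
    DifferentiableAt ℂ (fun ζ => conj (h (conj ζ + c))) ζ := by
  simpa [Function.comp_def] using (hh.comp (conj ζ) (differentiableAt_id.add_const c)).conj_conj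

lemma Convex.setOf_conj_add_mem {U : Set ℂ} (hU : Convex ℝ U) (c : ℂ) :
    Convex ℝ {ζ | conj ζ + c ∈ U} := by
  intro x hx y hy a b ha hb hab
  have hcomb : conj (a • x + b • y) + c = a • (conj x + c) + b • (conj y + c) := by
    simp only [Complex.real_smul, map_add, map_mul, Complex.conj_ofReal]
    have hab' : (a : ℂ) + b = 1 := by exact_mod_cast hab
    linear_combination (-c) * hab'
  simpa only [Set.mem_ofPred_eq, hcomb] using hU hx hy ha hb hab

section Polarization

variable {ι : Type*} [Fintype ι] {U : Set ℂ} {g h : ι → ℂ → ℂ}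

lemma sum_mul_conj_conj_add_eq_zero (hU : IsOpen U) (hUc : Convex ℝ U)
    (hg : ∀ k, DifferentiableOn ℂ (g k) U) (hh : ∀ k, DifferentiableOn ℂ (h k) U)
    (hdiag : ∀ z ∈ U, ∑ k, g k z * conj (h k z) = 0) {c p ζ : ℂ} (hpU : p ∈ U)
    (hp : conj p + c = p) (hζ : ζ ∈ U) (hζc : conj ζ + c ∈ U) :
    ∑ k, g k ζ * conj (h k (conj ζ + c)) = 0 := by
  have hφ : DifferentiableOn ℂ (fun ζ => ∑ k, g k ζ * conj (h k (conj ζ + c)))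
      (U ∩ {ζ | conj ζ + c ∈ U}) := by
    intro ζ hζ
    refine DifferentiableAt.differentiableWithinAt (DifferentiableAt.fun_sum fun k _ => ?_)
    exact ((hg k).differentiableAt (hU.mem_nhds hζ.1)).mul
      ((hh k).differentiableAt (hU.mem_nhds hζ.2)).conj_comp_conj_add
  have hline : ∃ᶠ ζ in 𝓝[≠] p, ∑ k, g k ζ * conj (h k (conj ζ + c)) = 0 := by
    refine frequently_nhdsNE_of_eventually_line one_ne_zero ?_
    have hcont : Continuous fun t : ℝ => p + t * 1 := by fun_prop
    filter_upwards [(hcont.tendsto' 0 p (by simp)).eventually (hU.mem_nhds hpU)] with t ht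
    have hfix : conj (p + t * 1) + c = p + t * 1 := by
      calc conj (p + t * 1) + c = (conj p + c) + t * 1 := by simp; ring
        _ = p + t * 1 := by rw [hp]
    rw [hfix]
    exact hdiag _ ht
  have hDopen : IsOpen (U ∩ {ζ | conj ζ + c ∈ U}) := hU.inter (hU.preimage (by fun_prop))
  exact (hφ.analyticOnNhd hDopen).eqOn_zero_of_preconnected_of_frequently_eq_zero
    (hUc.inter (hUc.setOf_conj_add_mem c)).isPreconnected
    ⟨hpU, show conj p + c ∈ U by rwa [hp]⟩ hline ⟨hζ, hζc⟩

lemma sum_mul_conj_eq_zero_of_re_eq (hU : IsOpen U) (hUc : Convex ℝ U)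
    (hg : ∀ k, DifferentiableOn ℂ (g k) U) (hh : ∀ k, DifferentiableOn ℂ (h k) U)
    (hdiag : ∀ z ∈ U, ∑ k, g k z * conj (h k z) = 0) {z w : ℂ} (hz : z ∈ U) (hw : w ∈ U)
    (hre : z.re = w.re) : ∑ k, g k z * conj (h k w) = 0 := by
  have hmid : (z + w) / 2 ∈ U := by
    convert hUc hz hw (by norm_num : (0 : ℝ) ≤ 1 / 2) (by norm_num : (0 : ℝ) ≤ 1 / 2)
      (by norm_num) using 1
    simp only [Complex.real_smul]
    push_cast
    ring
  have hfix : conj ((z + w) / 2) + (w - conj z) = (z + w) / 2 := by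
    rw [map_div₀, map_add, map_ofNat]
    apply Complex.ext <;> simp [Complex.div_ofNat_re, Complex.div_ofNat_im, hre]
    ring
  simpa using sum_mul_conj_conj_add_eq_zero hU hUc hg hh hdiag hmid hfix hz (by simpa using hw)

lemma sum_mul_conj_eq_zero (hU : IsOpen U) (hUc : Convex ℝ U)
    (hg : ∀ k, DifferentiableOn ℂ (g k) U) (hh : ∀ k, DifferentiableOn ℂ (h k) U)
    (hdiag : ∀ z ∈ U, ∑ k, g k z * conj (h k z) = 0) {z w : ℂ} (hz : z ∈ U) (hw : w ∈ U) :
    ∑ k, g k z * conj (h k w) = 0 := by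
  have hψ : DifferentiableOn ℂ (fun z => ∑ k, g k z * conj (h k w)) U :=
    DifferentiableOn.fun_sum fun k _ => (hg k).mul_const _
  have hline : ∃ᶠ z in 𝓝[≠] w, ∑ k, g k z * conj (h k w) = 0 := by
    refine frequently_nhdsNE_of_eventually_line Complex.I_ne_zero ?_
    have hcont : Continuous fun t : ℝ => w + t * Complex.I := by fun_prop
    filter_upwards [(hcont.tendsto' 0 w (by simp)).eventually (hU.mem_nhds hw)] with t ht
    exact sum_mul_conj_eq_zero_of_re_eq hU hUc hg hh hdiag ht hw (by simp)
  exact (hψ.analyticOnNhd hU).eqOn_zero_of_preconnected_of_frequently_eq_zero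
    hUc.isPreconnected hw hline hz

end Polarization

lemma sum_smul_restrict_eq_zero_iff {ι : Type*} [Fintype ι] {U : Set ℂ} {f : ι → ℂ → ℂ}
    {c : ι → ℂ} : ∑ i, c i • U.restrict (f i) = 0 ↔ ∀ z ∈ U, ∑ i, c i * f i z = 0 := by
  simp only [funext_iff, Finset.sum_apply, Pi.smul_apply, smul_eq_mul, Pi.zero_apply]
  exact ⟨fun h z hz => h ⟨z, hz⟩, fun h z => h z z.2⟩

lemma LinearIndependent.eq_zero_of_eventually_sum_mul_eq_zero {ι : Type*} [Fintype ι]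
    {U : Set ℂ} {f : ι → ℂ → ℂ} (hind : LinearIndependent ℂ fun i => U.restrict (f i))
    (hU : IsOpen U) (hUc : IsPreconnected U) (hf : ∀ i, DifferentiableOn ℂ (f i) U)
    {z₀ : ℂ} (hz₀ : z₀ ∈ U) {c : ι → ℂ} (hc : ∀ᶠ z in 𝓝 z₀, ∑ i, c i * f i z = 0) :
    c = 0 := by
  have hsum : Set.EqOn (fun z => ∑ i, c i * f i z) 0 U :=
    ((DifferentiableOn.fun_sum fun i _ => (hf i).const_mul (c i)).analyticOnNhd
      hU).eqOn_zero_of_preconnected_of_eventuallyEq_zero hUc hz₀ hc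
  funext i
  exact Fintype.linearIndependent_iff.mp hind c (sum_smul_restrict_eq_zero_iff.mpr hsum) i

/-- If `f_1, …, f_m` are linearly independent holomorphic functions on a
connected open set `U ⊆ ℂ`, then the `m²` functions `z ↦ f_i(z) * conj (f_j(z))` are
linearly independent over `ℂ`. -/
theorem stmt_8 {U : Set ℂ} (hU : IsOpen U) (hUc : IsConnected U)
    {m : ℕ} (f : Fin m → ℂ → ℂ) (hf : ∀ i, DifferentiableOn ℂ (f i) U)
    (hind : LinearIndependent ℂ fun i => U.restrict (f i)) :
    LinearIndependent ℂ fun ij : Fin m × Fin m =>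
      U.restrict fun z => f ij.1 z * (starRingEnd ℂ) (f ij.2 z) := by
  rw [Fintype.linearIndependent_iff]
  intro c hc
  have hdiag : ∀ z ∈ U, ∑ ij : Fin m × Fin m, c ij * f ij.1 z * conj (f ij.2 z) = 0 := by
    simpa only [mul_assoc] using sum_smul_restrict_eq_zero_iff.mp hc
  obtain ⟨z₀, hz₀⟩ := hUc.nonempty
  obtain ⟨r, hr, hball⟩ := Metric.isOpen_iff.mp hU z₀ hz₀
  have hpolar : ∀ z ∈ Metric.ball z₀ r, ∀ w ∈ Metric.ball z₀ r,
      ∑ ij : Fin m × Fin m, c ij * f ij.1 z * conj (f ij.2 w) = 0 :=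
    fun z hz w hw => sum_mul_conj_eq_zero Metric.isOpen_ball (convex_ball z₀ r)
      (g := fun ij z => c ij * f ij.1 z) (h := fun ij => f ij.2)
      (fun ij => ((hf ij.1).mono hball).const_mul _) (fun ij => (hf ij.2).mono hball)
      (fun z hz => hdiag z (hball hz)) hz hw
  have hnear : ∀ᶠ z in 𝓝 z₀, z ∈ Metric.ball z₀ r := Metric.ball_mem_nhds z₀ hr
  have hcol : ∀ z ∈ Metric.ball z₀ r, ∀ j, ∑ i, c (i, j) * f i z = 0 := by
    intro z hz j
    have hconj := hind.eq_zero_of_eventually_sum_mul_eq_zero hU hUc.isPreconnected hf hz₀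
      (c := fun j => conj (∑ i, c (i, j) * f i z)) (by
        filter_upwards [hnear] with w hw
        calc ∑ j, conj (∑ i, c (i, j) * f i z) * f j w
            = conj (∑ ij : Fin m × Fin m, c ij * f ij.1 z * conj (f ij.2 w)) := by
              simp only [map_sum, map_mul, Complex.conj_conj, Fintype.sum_prod_type, Finset.sum_mul]
              exact Finset.sum_comm
          _ = 0 := by rw [hpolar z hz w hw, map_zero])
    exact (map_eq_zero (starRingEnd ℂ)).mp (congrFun hconj j)
  rintro ⟨i, j⟩
  exact congrFun (hind.eq_zero_of_eventually_sum_mul_eq_zero hU hUc.isPreconnected hf hz₀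
    (c := fun i => c (i, j)) (by filter_upwards [hnear] with z hz using hcol z hz j)) i
end
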